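/- There is a universal constant c such that for every finite alphabet Γ, every bottom-up deterministic tree automaton A = (Q, F, ι, δ) on full binary trees over the alphabet Γ̄ = Γ × {0,1}, and every full binary Γ-tree T, there exists a monotone circuit C whose variable gates are in bijection with the leaves of T, which is a d-DNNF in zero-suppressed semantics, such that S(C) equals the assignment set α(A, T) (identifying each assignment with the corresponding set of leaves of T), and such that |C| ≤ c · |Γ| · |Q|² · |T|. -/

import Mathlib

/-! The circuit simulates the run of `A` bottom-up. For every node `y` of `T` and state `q` an
OR-gate captures the sets of leaves below `y` on which `A` reaches `q` at `y`; at an internal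
node it is the disjunction, over the pairs `(q₁, q₂)` with `δ(label, q₁, q₂) = q`, of AND-gates
joining the gates of the two children for `q₁` and `q₂`. These AND-gates are decomposable since
the two children have disjoint sets of leaves below them, and the OR-gates are deterministic
since an assignment determines the state of the run at every node. There are
`O(|T|·|Q|²)` gates, and every wire is determined by a node, at most two states, a label and a
bit. -/

/-- The type of a gate in a monotone circuit: variable gate, AND-gate, or OR-gate. -/
inductive GateType : Type
  | var
  | and
  | or
  deriving DecidableEq

/-- A monotone circuit: a finite DAG of gates with wires, a distinguished output gate,
each gate labeled as a variable gate (carrying a variable label in `ι`), an AND-gate,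
or an OR-gate.  Variable gates have no inputs, and the wire relation is acyclic. -/
structure Circuit (ι : Type) [DecidableEq ι] where
  Gate : Type
  fintypeGate : Fintype Gate
  decEqGate : DecidableEq Gate
  wire : Gate → Gate → Prop
  decWire : ∀ a b : Gate, Decidable (wire a b)
  typ : Gate → GateType
  vlab : Gate → ι
  output : Gate
  var_no_input : ∀ g g' : Gate, typ g' = GateType.var → ¬ wire g g'
  acyclic : ∀ g : Gate, ¬ Relation.TransGen wire g g

attribute [instance] Circuit.fintypeGate Circuit.decEqGate Circuit.decWire

namespace Circuit

variable {ι : Type} [DecidableEq ι]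

/-- The inputs of a gate `g`: the gates with a wire to `g`. -/
def inputs (C : Circuit ι) (g : C.Gate) : Finset C.Gate :=
  Finset.univ.filter fun g' => C.wire g' g

/-- The fan-in of a gate: its number of inputs. -/
def fanin (C : Circuit ι) (g : C.Gate) : ℕ :=
  (C.inputs g).card

/-- The gates that `g` is an input of. -/
def outs (C : Circuit ι) (g : C.Gate) : Finset C.Gate :=
  Finset.univ.filter fun g' => C.wire g g'

/-- The size of a circuit: its number of gates plus its number of wires. -/
noncomputable def size (C : Circuit ι) : ℕ :=
  Fintype.card C.Gate + {p : C.Gate × C.Gate | C.wire p.1 p.2}.ncard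

/-- Zero-suppressed semantics: `Captures C g t` says that the assignment `t`
(a finite set of variables) belongs to the set captured by gate `g`, defined bottom-up:
a variable gate captures exactly its own singleton; an AND-gate captures the unions of
assignments captured by its inputs (one from each input); an OR-gate captures the union
of the sets captured by its inputs. -/
inductive Captures (C : Circuit ι) : C.Gate → Finset ι → Prop
  | var (g : C.Gate) (h : C.typ g = GateType.var) : Captures C g {C.vlab g}
  | and (g : C.Gate) (h : C.typ g = GateType.and) (f : C.Gate → Finset ι)
      (hf : ∀ g' ∈ C.inputs g, Captures C g' (f g')) :
      Captures C g ((C.inputs g).biUnion f)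
  | or (g : C.Gate) (h : C.typ g = GateType.or) (g' : C.Gate) (hg' : g' ∈ C.inputs g)
      (t : Finset ι) (ht : Captures C g' t) : Captures C g t

/-- The set `S(g)` of assignments captured by a gate `g` in zero-suppressed semantics. -/
def S (C : Circuit ι) (g : C.Gate) : Set (Finset ι) :=
  {t | C.Captures g t}

/-- The captured set `S(C)` of the circuit: the captured set of its output gate. -/
def captured (C : Circuit ι) : Set (Finset ι) :=
  C.S C.output

/-- `C.Reaches g g'` holds when there is a (possibly empty) directed path of wires
from `g` to `g'`. -/
def Reaches (C : Circuit ι) : C.Gate → C.Gate → Prop :=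
  Relation.ReflTransGen C.wire

/-- An AND-gate is decomposable if no variable gate has directed paths to two distinct
inputs of it. -/
def DecomposableAnd (C : Circuit ι) (g : C.Gate) : Prop :=
  ∀ v g1 g2 : C.Gate, C.typ v = GateType.var → g1 ∈ C.inputs g → g2 ∈ C.inputs g →
    g1 ≠ g2 → C.Reaches v g1 → C.Reaches v g2 → False

/-- An OR-gate is deterministic if the captured sets of any two distinct inputs
are disjoint. -/
def DeterministicOr (C : Circuit ι) (g : C.Gate) : Prop :=
  ∀ g1 g2 : C.Gate, g1 ∈ C.inputs g → g2 ∈ C.inputs g → g1 ≠ g2 →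
    Disjoint (C.S g1) (C.S g2)

/-- A circuit is a d-DNNF in zero-suppressed semantics if every AND-gate is decomposable
and every OR-gate is deterministic. -/
def dDNNF (C : Circuit ι) : Prop :=
  (∀ g : C.Gate, C.typ g = GateType.and → C.DecomposableAnd g) ∧
  (∀ g : C.Gate, C.typ g = GateType.or → C.DeterministicOr g)

/-- Distinct variable gates carry distinct variable labels (i.e., variables can be
identified with variable gates, as in the paper). -/
def VarInj (C : Circuit ι) : Prop :=
  Set.InjOn C.vlab {g : C.Gate | C.typ g = GateType.var}

/-- `C` is ∅-pruned: every gate captures a nonempty set (no gate is unsatisfiable). -/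
def EmptyPruned (C : Circuit ι) : Prop :=
  ∀ g : C.Gate, (C.S g).Nonempty

/-- `C` is {}-pruned: no gate captures a set containing the empty assignment. -/
def ZeroPruned (C : Circuit ι) : Prop :=
  ∀ g : C.Gate, (∅ : Finset ι) ∉ C.S g

/-- An exit: an OR-gate having an input which is not an OR-gate. -/
def IsExit (C : Circuit ι) (g : C.Gate) : Prop :=
  C.typ g = GateType.or ∧ ∃ g' ∈ C.inputs g, C.typ g' ≠ GateType.or

/-- A normal circuit: arity-two, ∅-pruned, {}-pruned, collapsed, and discriminative. -/
def Normal (C : Circuit ι) : Prop :=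
  (∀ g : C.Gate, C.fanin g ≤ 2) ∧
  C.EmptyPruned ∧
  C.ZeroPruned ∧
  (∀ g : C.Gate, C.typ g = GateType.and → C.fanin g ≠ 1) ∧
  (∀ g : C.Gate, C.IsExit g →
    C.fanin g = 1 ∧ (C.outs g).card = 1 ∧ ∀ g' : C.Gate, C.wire g g' → C.typ g' = GateType.or)

/-- A wire both of whose endpoints are OR-gates. -/
def orWire (C : Circuit ι) (a b : C.Gate) : Prop :=
  C.wire a b ∧ C.typ a = GateType.or ∧ C.typ b = GateType.or

/-- The OR-component of an OR-gate `g`: the OR-gates connected to `g` by paths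
traversing, in either direction, only wires both of whose endpoints are OR-gates. -/
def orComponent (C : Circuit ι) (g : C.Gate) : Set C.Gate :=
  {g' : C.Gate | C.typ g' = GateType.or ∧
    Relation.ReflTransGen (fun x y => C.orWire x y ∨ C.orWire y x) g g'}

/-- The exits of an OR-gate `g`: the exits of its OR-component having a directed path
to `g` within the OR-component. -/
def exitsOf (C : Circuit ι) (g : C.Gate) : Set C.Gate :=
  {e : C.Gate | C.IsExit e ∧ Relation.ReflTransGen C.orWire e g}

/-- An OR-path of `C`: a directed path (of length at least one) all of whose
intermediate gates are OR-gates. -/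
inductive OrPath (C : Circuit ι) : C.Gate → C.Gate → Prop
  | single (a b : C.Gate) (h : C.wire a b) : OrPath C a b
  | step (a m b : C.Gate) (h : C.wire a m) (hm : C.typ m = GateType.or)
      (hp : OrPath C m b) : OrPath C a b

/-- A gate is 0-valid if it captures the empty assignment. -/
def ZeroValid (C : Circuit ι) (g : C.Gate) : Prop :=
  (∅ : Finset ι) ∈ C.S g

/-- A wire `(g, g')` is pure if `g'` is an OR-gate, or `g'` is an AND-gate all of whose
other inputs are 0-valid. -/
def PureWire (C : Circuit ι) (g g' : C.Gate) : Prop :=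
  C.wire g g' ∧
    (C.typ g' = GateType.or ∨
      (C.typ g' = GateType.and ∧ ∀ h ∈ C.inputs g', h ≠ g → C.ZeroValid h))

/-- A gate `g` is upwards-deterministic if it is unsatisfiable or there is at most one
gate `g'` such that `(g, g')` is a pure wire. -/
def UpDetGate (C : Circuit ι) (g : C.Gate) : Prop :=
  C.S g = ∅ ∨ ∀ g1 g2 : C.Gate, C.PureWire g g1 → C.PureWire g g2 → g1 = g2

/-- A circuit is upwards-deterministic if all its AND-gates and OR-gates are. -/
def UpwardsDeterministic (C : Circuit ι) : Prop :=
  ∀ g : C.Gate, (C.typ g = GateType.and ∨ C.typ g = GateType.or) → C.UpDetGate g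

end Circuit

/-- A full binary tree over an alphabet `Γ`: every internal node has exactly two
(ordered) children, and every node carries a label in `Γ`. -/
inductive BTree (Γ : Type) : Type
  | leaf (a : Γ) : BTree Γ
  | node (a : Γ) (l r : BTree Γ) : BTree Γ

namespace BTree

/-- The number of nodes of the tree. -/
def size {Γ : Type} : BTree Γ → ℕ
  | .leaf _ => 1
  | .node _ l r => 1 + l.size + r.size

/-- Leaves of the tree are identified by their positions: lists of Booleans describing
the path from the root (`false` = first child, `true` = second child). -/
def IsLeafPos {Γ : Type} : BTree Γ → List Bool → Prop
  | .leaf _, [] => True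
  | .leaf _, _ :: _ => False
  | .node _ _ _, [] => False
  | .node _ l _, false :: p => l.IsLeafPos p
  | .node _ _ r, true :: p => r.IsLeafPos p

/-- `T.applyVal ν` is the tree `ν(T)` over `Γ × Bool` obtained from `T` by relabeling
every leaf at position `p` from `a` to `(a, ν p)` and every internal node from `a`
to `(a, false)`, where `ν` is a leaf valuation given by positions. -/
def applyVal {Γ : Type} : BTree Γ → (List Bool → Bool) → BTree (Γ × Bool)
  | .leaf a, ν => .leaf (a, ν [])
  | .node a l r, ν =>
      .node (a, false) (l.applyVal fun p => ν (false :: p))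
        (r.applyVal fun p => ν (true :: p))

end BTree

/-- A bottom-up deterministic tree automaton on full binary trees over alphabet `Δ`:
states `Q`, accepting states `F`, initialization function `init`, and transition
function `delta`, which is symmetric in its two state arguments so that the order of
children never matters. -/
structure BDTA (Δ : Type) where
  Q : Type
  fintypeQ : Fintype Q
  F : Set Q
  init : Δ → Q
  delta : Δ → Q → Q → Q
  symm : ∀ (a : Δ) (q1 q2 : Q), delta a q1 q2 = delta a q2 q1

attribute [instance] BDTA.fintypeQ

namespace BDTA

/-- The run of the automaton: the state reached at the root of the tree. -/
def run {Δ : Type} (A : BDTA Δ) : BTree Δ → A.Q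
  | .leaf a => A.init a
  | .node a l r => A.delta a (A.run l) (A.run r)

/-- The automaton accepts a tree if its run reaches an accepting state at the root. -/
def Accepts {Δ : Type} (A : BDTA Δ) (t : BTree Δ) : Prop :=
  A.run t ∈ A.F

end BDTA

/-- The assignment set `α(A, T)` of a `Γ̄`-bDTA `A` on a full binary `Γ`-tree `T`:
the family of the sets of leaves (identified by their positions) set to `true` by the
leaf valuations `ν` such that `A` accepts `ν(T)`. -/
def assignSet {Γ : Type} (A : BDTA (Γ × Bool)) (T : BTree Γ) : Set (Finset (List Bool)) :=
  {s | ∃ ν : List Bool → Bool, A.Accepts (T.applyVal ν) ∧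
    ∀ p : List Bool, p ∈ s ↔ (T.IsLeafPos p ∧ ν p = true)}

theorem List.eq_of_append_singleton_prefix {α : Type*} {p v : List α} {b b' : α}
    (h : p ++ [b] <+: v) (h' : p ++ [b'] <+: v) : b = b' := by
  simpa using (List.prefix_of_prefix_length_le h h' (by simp)).eq_of_length (by simp)

theorem List.injective_finsetImage_append {α : Type*} [DecidableEq α] (p : List α) :
    Function.Injective (Finset.image (p ++ ·)) :=
  Finset.image_injective (List.append_right_injective p)

namespace BTree

variable {Γ : Type}

def subtreeAt : BTree Γ → List Bool → Option (BTree Γ)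
  | t, [] => some t
  | leaf _, _ :: _ => none
  | node _ l _, false :: p => subtreeAt l p
  | node _ _ r, true :: p => subtreeAt r p

@[simp] theorem subtreeAt_nil (t : BTree Γ) : t.subtreeAt [] = some t := by
  cases t <;> rfl

theorem subtreeAt_append (t : BTree Γ) (p r : List Bool) :
    t.subtreeAt (p ++ r) = (t.subtreeAt p).bind (·.subtreeAt r) := by
  induction p generalizing t with
  | nil => simp
  | cons b p ih => cases t <;> cases b <;> simp [subtreeAt, ih]

theorem subtreeAt_append_false {t : BTree Γ} {p : List Bool} {a : Γ} {l r : BTree Γ}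
    (h : t.subtreeAt p = some (node a l r)) : t.subtreeAt (p ++ [false]) = some l := by
  simp [subtreeAt_append, h, subtreeAt]

theorem subtreeAt_append_true {t : BTree Γ} {p : List Bool} {a : Γ} {l r : BTree Γ}
    (h : t.subtreeAt p = some (node a l r)) : t.subtreeAt (p ++ [true]) = some r := by
  simp [subtreeAt_append, h, subtreeAt]

theorem isLeafPos_leaf {a : Γ} {p : List Bool} : (leaf a).IsLeafPos p ↔ p = [] := by
  cases p <;> simp [IsLeafPos]

theorem isLeafPos_iff_subtreeAt {t : BTree Γ} {p : List Bool} :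
    t.IsLeafPos p ↔ ∃ a, t.subtreeAt p = some (leaf a) := by
  induction t generalizing p with
  | leaf a => cases p <;> simp [IsLeafPos, subtreeAt]
  | node a l r ihl ihr =>
    rcases p with _ | ⟨_ | _, p⟩ <;> simp [IsLeafPos, subtreeAt, ihl, ihr]

def nodes : BTree Γ → Finset (List Bool)
  | leaf _ => {[]}
  | node _ l r => insert [] (l.nodes.image (List.cons false) ∪ r.nodes.image (List.cons true))

theorem mem_nodes {t : BTree Γ} {p : List Bool} : p ∈ t.nodes ↔ ∃ u, t.subtreeAt p = some u := by
  induction t generalizing p with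
  | leaf a => cases p <;> simp [nodes, subtreeAt]
  | node a l r ihl ihr =>
    rcases p with _ | ⟨_ | _, p⟩ <;> simp [nodes, subtreeAt, ihl, ihr]

theorem nil_mem_nodes (t : BTree Γ) : [] ∈ t.nodes :=
  mem_nodes.2 ⟨t, subtreeAt_nil t⟩

theorem mem_nodes_of_prefix {t : BTree Γ} {p p' : List Bool} (h : p <+: p')
    (hp' : p' ∈ t.nodes) : p ∈ t.nodes := by
  obtain ⟨r, rfl⟩ := h
  obtain ⟨u, hu⟩ := mem_nodes.1 hp'
  rw [subtreeAt_append, Option.bind_eq_some_iff] at hu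
  obtain ⟨v, hv, -⟩ := hu
  exact mem_nodes.2 ⟨v, hv⟩

theorem mem_nodes_of_isLeafPos {t : BTree Γ} {p : List Bool} (h : t.IsLeafPos p) :
    p ∈ t.nodes :=
  let ⟨_, ha⟩ := isLeafPos_iff_subtreeAt.1 h
  mem_nodes.2 ⟨_, ha⟩

theorem card_nodes_le_size (t : BTree Γ) : t.nodes.card ≤ t.size := by
  induction t with
  | leaf a => simp [nodes, size]
  | node a l r ihl ihr =>
    calc (node a l r).nodes.card
        ≤ (l.nodes.image (List.cons false) ∪ r.nodes.image (List.cons true)).card + 1 :=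
          Finset.card_insert_le _ _
      _ ≤ (l.nodes.image (List.cons false)).card + (r.nodes.image (List.cons true)).card + 1 :=
          Nat.add_le_add_right (Finset.card_union_le _ _) 1
      _ ≤ l.nodes.card + r.nodes.card + 1 := by
          have := Nat.add_le_add (l.nodes.card_image_le (f := List.cons false))
            (r.nodes.card_image_le (f := List.cons true))
          omega
      _ ≤ (node a l r).size := by simp only [size]; omega

theorem length_lt_size {t : BTree Γ} {p : List Bool} (h : p ∈ t.nodes) : p.length < t.size := by
  induction t generalizing p with
  | leaf a => simp_all [nodes, size]
  | node a l r ihl ihr =>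
    simp only [nodes, Finset.mem_insert, Finset.mem_union, Finset.mem_image] at h
    rcases h with rfl | ⟨p, hp, rfl⟩ | ⟨p, hp, rfl⟩
    · simp [size]
    · have := ihl hp; simp only [size, List.length_cons]; omega
    · have := ihr hp; simp only [size, List.length_cons]; omega

theorem applyVal_congr (t : BTree Γ) {ν ν' : List Bool → Bool}
    (h : ∀ p, t.IsLeafPos p → ν p = ν' p) : t.applyVal ν = t.applyVal ν' := by
  induction t generalizing ν ν' with
  | leaf a => simp only [applyVal, h [] trivial]
  | node a l r ihl ihr =>
    simp only [applyVal, ihl fun p hp => h (false :: p) hp, ihr fun p hp => h (true :: p) hp]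

def joinAssign (s₁ s₂ : Finset (List Bool)) : Finset (List Bool) :=
  s₁.image (List.cons false) ∪ s₂.image (List.cons true)

@[simp] theorem false_cons_mem_joinAssign {s₁ s₂ : Finset (List Bool)} {p : List Bool} :
    false :: p ∈ joinAssign s₁ s₂ ↔ p ∈ s₁ := by
  simp [joinAssign]

@[simp] theorem true_cons_mem_joinAssign {s₁ s₂ : Finset (List Bool)} {p : List Bool} :
    true :: p ∈ joinAssign s₁ s₂ ↔ p ∈ s₂ := by
  simp [joinAssign]

theorem joinAssign_injective : Function.Injective2 joinAssign := by
  intro s₁ s₁' s₂ s₂' h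
  constructor <;> ext p
  · simpa using congrArg (false :: p ∈ ·) h
  · simpa using congrArg (true :: p ∈ ·) h

theorem image_append_joinAssign (p : List Bool) (s₁ s₂ : Finset (List Bool)) :
    (joinAssign s₁ s₂).image (p ++ ·) =
      s₁.image ((p ++ [false]) ++ ·) ∪ s₂.image ((p ++ [true]) ++ ·) := by
  simp [joinAssign, Finset.image_union, Finset.image_image, Function.comp_def]

theorem image2_union_image_append (p : List Bool) (S₁ S₂ : Set (Finset (List Bool))) :
    Set.image2 (· ∪ ·) (Finset.image ((p ++ [false]) ++ ·) '' S₁)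
        (Finset.image ((p ++ [true]) ++ ·) '' S₂) =
      Finset.image (p ++ ·) '' Set.image2 joinAssign S₁ S₂ := by
  rw [Set.image_image2, Set.image2_image_left, Set.image2_image_right]
  simp only [image_append_joinAssign]

end BTree

namespace BDTA

open BTree

variable {Γ : Type} (A : BDTA (Γ × Bool))

def stateSet (u : BTree Γ) (q : A.Q) : Set (Finset (List Bool)) :=
  {s | (∀ p ∈ s, u.IsLeafPos p) ∧ A.run (u.applyVal fun p => decide (p ∈ s)) = q}

variable {A}

theorem eq_of_mem_stateSet {u : BTree Γ} {q q' : A.Q} {s : Finset (List Bool)}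
    (h : s ∈ A.stateSet u q) (h' : s ∈ A.stateSet u q') : q = q' :=
  h.2.symm.trans h'.2

theorem mem_stateSet_leaf {a : Γ} {q : A.Q} {s : Finset (List Bool)} :
    s ∈ A.stateSet (leaf a) q ↔
      (s = ∅ ∧ A.init (a, false) = q) ∨ (s = {[]} ∧ A.init (a, true) = q) := by
  simp only [stateSet, Set.mem_ofPred_eq, isLeafPos_leaf, applyVal, run]
  constructor
  · rintro ⟨hs, rfl⟩
    rcases Finset.subset_singleton_iff.1 fun p hp => Finset.mem_singleton.2 (hs p hp)
      with rfl | rfl <;> simp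
  · rintro (⟨rfl, rfl⟩ | ⟨rfl, rfl⟩) <;> simp

theorem mem_stateSet_node {a : Γ} {l r : BTree Γ} {q : A.Q} {s : Finset (List Bool)} :
    s ∈ A.stateSet (node a l r) q ↔
      ∃ q₁ q₂, A.delta (a, false) q₁ q₂ = q ∧
        ∃ s₁ ∈ A.stateSet l q₁, ∃ s₂ ∈ A.stateSet r q₂, s = joinAssign s₁ s₂ := by
  constructor
  · rintro ⟨hs, rfl⟩
    refine ⟨_, _, rfl, s.preimage (List.cons false) List.cons_injective.injOn, ⟨?_, ?_⟩,
      s.preimage (List.cons true) List.cons_injective.injOn, ⟨?_, ?_⟩, ?_⟩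
    · exact fun p hp => hs _ (Finset.mem_preimage.1 hp)
    · simp only [Finset.mem_preimage]
    · exact fun p hp => hs _ (Finset.mem_preimage.1 hp)
    · simp only [Finset.mem_preimage]
    · ext p
      rcases p with _ | ⟨_ | _, p⟩
      · simpa [joinAssign, IsLeafPos] using hs []
      · simp
      · simp
  · rintro ⟨q₁, q₂, rfl, s₁, ⟨hs₁, rfl⟩, s₂, ⟨hs₂, rfl⟩, rfl⟩
    refine ⟨?_, by simp [applyVal, run]⟩
    simp only [joinAssign, Finset.mem_union, Finset.mem_image]
    rintro _ (⟨p, hp, rfl⟩ | ⟨p, hp, rfl⟩)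
    exacts [hs₁ p hp, hs₂ p hp]

theorem assignSet_eq_biUnion_stateSet (A : BDTA (Γ × Bool)) (T : BTree Γ) :
    assignSet A T = ⋃ q ∈ A.F, A.stateSet T q := by
  ext s
  simp only [assignSet, Set.mem_iUnion, exists_prop]
  constructor
  · rintro ⟨ν, hacc, hs⟩
    refine ⟨_, hacc, fun p hp => ((hs p).1 hp).1, ?_⟩
    congr 1
    refine applyVal_congr T fun p hp => ?_
    simp [hs p, hp]
  · rintro ⟨q, hq, hleaf, rfl⟩
    exact ⟨_, hq, fun p => ⟨fun hp => ⟨hleaf p hp, by simpa⟩, fun ⟨_, hp⟩ => by simpa using hp⟩⟩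

end BDTA

namespace Circuit

variable {ι : Type} [DecidableEq ι] (C : Circuit ι) {g : C.Gate}

theorem mem_S {t : Finset ι} : t ∈ C.S g ↔ C.Captures g t := Iff.rfl

theorem mem_inputs {g' : C.Gate} : g' ∈ C.inputs g ↔ C.wire g' g := by
  simp [inputs]

theorem S_of_typ_var (hg : C.typ g = .var) : C.S g = {{C.vlab g}} := by
  ext t
  constructor
  · intro h
    cases h with
    | var => rfl
    | and _ h => cases hg.symm.trans h
    | or _ h => cases hg.symm.trans h
  · rintro rfl
    exact Captures.var g hg

theorem mem_S_of_typ_or (hg : C.typ g = .or) {t : Finset ι} :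
    t ∈ C.S g ↔ ∃ g', C.wire g' g ∧ t ∈ C.S g' := by
  constructor
  · intro h
    cases h with
    | var _ h => cases hg.symm.trans h
    | and _ h => cases hg.symm.trans h
    | or _ _ g' hg' _ ht => exact ⟨g', (C.mem_inputs).1 hg', ht⟩
  · rintro ⟨g', hw, ht⟩
    exact Captures.or g hg g' ((C.mem_inputs).2 hw) t ht

theorem S_of_typ_and_of_inputs_eq_empty (hg : C.typ g = .and) (hin : C.inputs g = ∅) :
    C.S g = {∅} := by
  ext t
  constructor
  · intro h
    cases h with
    | var _ h => cases hg.symm.trans h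
    | and _ _ f => simp [hin]
    | or _ h => cases hg.symm.trans h
  · rintro rfl
    rw [mem_S]
    simpa [hin] using Captures.and g hg (fun _ => ∅) (by simp [hin])

theorem S_of_typ_and_of_inputs_eq_pair (hg : C.typ g = .and) {g₁ g₂ : C.Gate}
    (hin : C.inputs g = {g₁, g₂}) (hne : g₁ ≠ g₂) :
    C.S g = Set.image2 (· ∪ ·) (C.S g₁) (C.S g₂) := by
  ext t
  constructor
  · intro h
    cases h with
    | var _ h => cases hg.symm.trans h
    | and _ _ f hf =>
      rw [hin] at hf ⊢
      exact ⟨f g₁, hf _ (by simp), f g₂, hf _ (by simp), by simp⟩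
    | or _ h => cases hg.symm.trans h
  · rintro ⟨t₁, h₁, t₂, h₂, rfl⟩
    have := Captures.and g hg (fun g' => if g' = g₁ then t₁ else t₂) (by
      rw [hin]
      intro g' hg'
      rcases Finset.mem_insert.1 hg' with rfl | hg'
      · simpa using (C.mem_S).1 h₁
      · simpa [Finset.mem_singleton.1 hg', Ne.symm hne] using (C.mem_S).1 h₂)
    rwa [hin, Finset.biUnion_insert, Finset.singleton_biUnion, if_pos rfl, if_neg hne.symm]
      at this

end Circuit

namespace TreeProvenance

open BTree

variable {Γ : Type}

abbrev NodePos (T : BTree Γ) : Type := {p : List Bool // p ∈ T.nodes}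

abbrev LeafPos (T : BTree Γ) : Type := {p : List Bool // T.IsLeafPos p}

def NodePos.root {T : BTree Γ} : NodePos T := ⟨[], T.nil_mem_nodes⟩

def NodePos.parent {T : BTree Γ} (y : NodePos T) : NodePos T :=
  ⟨y.1.dropLast, mem_nodes_of_prefix (List.dropLast_prefix _) y.2⟩

def LeafPos.toNode {T : BTree Γ} (x : LeafPos T) : NodePos T :=
  ⟨x.1, mem_nodes_of_isLeafPos x.2⟩

instance {T : BTree Γ} : Finite (LeafPos T) :=
  Finite.of_injective LeafPos.toNode fun _ _ h => Subtype.ext (congrArg Subtype.val h :)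

/-- `state y q` captures the assignments of the subtree at `y` on which `A` reaches `q`,
`trans y q₁ q₂` those on which `A` reaches `q₁` and `q₂` at the two children of `y`
(it is a dead gate when `y` is a leaf), and `empty` captures `{∅}`. -/
inductive Gate (A : BDTA (Γ × Bool)) (T : BTree Γ) : Type
  | out
  | empty
  | var (x : LeafPos T)
  | state (y : NodePos T) (q : A.Q)
  | trans (y : NodePos T) (q₁ q₂ : A.Q)

variable {A : BDTA (Γ × Bool)} {T : BTree Γ}

namespace Gate

def typ : Gate A T → GateType
  | out | state .. => .or
  | empty | trans .. => .and
  | var _ => .var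

def vlab : Gate A T → List Bool
  | var x => x.1
  | _ => []

def equivSum : Gate A T ≃ Unit ⊕ Unit ⊕ LeafPos T ⊕ NodePos T × A.Q ⊕ NodePos T × A.Q × A.Q where
  toFun
    | out => .inl ()
    | empty => .inr (.inl ())
    | var x => .inr (.inr (.inl x))
    | state y q => .inr (.inr (.inr (.inl (y, q))))
    | trans y q₁ q₂ => .inr (.inr (.inr (.inr (y, q₁, q₂))))
  invFun
    | .inl () => out
    | .inr (.inl ()) => empty
    | .inr (.inr (.inl x)) => var x
    | .inr (.inr (.inr (.inl (y, q)))) => state y q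
    | .inr (.inr (.inr (.inr (y, q₁, q₂)))) => trans y q₁ q₂
  left_inv g := by cases g <;> rfl
  right_inv e := by rcases e with _ | _ | _ | _ | _ <;> rfl

instance : Finite (Gate A T) := .of_equiv _ equivSum.symm

noncomputable instance : DecidableEq (Gate A T) := Classical.decEq _

theorem natCard_le : Nat.card (Gate A T) ≤
    2 + Nat.card (LeafPos T) + Nat.card (NodePos T) * Nat.card A.Q +
      Nat.card (NodePos T) * Nat.card A.Q ^ 2 := by
  rw [Nat.card_congr equivSum]
  simp only [Nat.card_sum, Nat.card_prod, Nat.card_unique]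
  ring_nf
  omega

end Gate

/-- The constraints of a wire are stated as equations, so that all indices are variables and
`cases` on a wire never has to unify non-variable terms. -/
inductive Wire : Gate A T → Gate A T → Prop
  | var_state {x : LeafPos T} {y : NodePos T} {a : Γ} {q : A.Q} (hxy : x.1 = y.1)
      (hy : T.subtreeAt y.1 = some (leaf a)) (hq : A.init (a, true) = q) :
      Wire (.var x) (.state y q)
  | empty_state {y : NodePos T} {a : Γ} {q : A.Q}
      (hy : T.subtreeAt y.1 = some (leaf a)) (hq : A.init (a, false) = q) :
      Wire .empty (.state y q)
  | trans_state {y : NodePos T} {a : Γ} {l r : BTree Γ} {q₁ q₂ q : A.Q}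
      (hy : T.subtreeAt y.1 = some (node a l r)) (hq : A.delta (a, false) q₁ q₂ = q) :
      Wire (.trans y q₁ q₂) (.state y q)
  | left_trans {x y : NodePos T} {q₁ q₂ : A.Q} (hy : y.1 = x.1 ++ [false]) :
      Wire (.state y q₁) (.trans x q₁ q₂)
  | right_trans {x y : NodePos T} {q₁ q₂ : A.Q} (hy : y.1 = x.1 ++ [true]) :
      Wire (.state y q₂) (.trans x q₁ q₂)
  | state_out {y : NodePos T} {q : A.Q} (hy : y.1 = []) (hq : q ∈ A.F) :
      Wire (.state y q) .out

-- Positions have length `< T.size` (`length_lt_size`), so these subtractions never truncate.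
def rank : Gate A T → ℕ
  | .out => 2 * T.size + 3
  | .empty | .var _ => 0
  | .state y _ => 2 * (T.size - y.1.length) + 2
  | .trans y _ _ => 2 * (T.size - y.1.length) + 1

theorem rank_lt_of_wire {g g' : Gate A T} (h : Wire g g') : rank g < rank g' := by
  cases h with
  | var_state | empty_state => simp [rank]
  | trans_state => simp [rank]
  | @left_trans _ y _ _ hy | @right_trans _ y _ _ hy =>
    have := length_lt_size y.2
    simp only [rank, hy, List.length_append, List.length_singleton] at this ⊢
    omega
  | state_out => simp only [rank]; omega

theorem rank_lt_of_transGen {g g' : Gate A T} (h : Relation.TransGen Wire g g') :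
    rank g < rank g' := by
  induction h with
  | single h => exact rank_lt_of_wire h
  | tail _ h ih => exact ih.trans (rank_lt_of_wire h)

variable (A T) in
@[reducible] noncomputable def circuit : Circuit (List Bool) where
  Gate := Gate A T
  fintypeGate := .ofFinite _
  decEqGate := inferInstance
  wire := Wire
  decWire _ _ := Classical.dec _
  typ := Gate.typ
  vlab := Gate.vlab
  output := .out
  var_no_input _ _ hg' h := by cases h <;> cases hg'
  acyclic _ h := (rank_lt_of_transGen h).false

theorem S_var (x : LeafPos T) : (circuit A T).S (.var x) = {{x.1}} :=
  (circuit A T).S_of_typ_var rfl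

theorem S_empty : (circuit A T).S .empty = {∅} := by
  refine (circuit A T).S_of_typ_and_of_inputs_eq_empty rfl
    (Finset.eq_empty_of_forall_notMem fun g h => ?_)
  rw [Circuit.mem_inputs] at h
  cases h

theorem S_trans {x y₁ y₂ : NodePos T} (h₁ : y₁.1 = x.1 ++ [false]) (h₂ : y₂.1 = x.1 ++ [true])
    (q₁ q₂ : A.Q) :
    (circuit A T).S (.trans x q₁ q₂) =
      Set.image2 (· ∪ ·) ((circuit A T).S (.state y₁ q₁)) ((circuit A T).S (.state y₂ q₂)) := by
  refine (circuit A T).S_of_typ_and_of_inputs_eq_pair rfl ?_ ?_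
  · ext g
    rw [Circuit.mem_inputs, Finset.mem_insert, Finset.mem_singleton]
    constructor
    · intro h
      cases h with
      | left_trans hy => exact .inl (by rw [Subtype.ext (hy.trans h₁.symm)])
      | right_trans hy => exact .inr (by rw [Subtype.ext (hy.trans h₂.symm)])
    · rintro (rfl | rfl)
      exacts [.left_trans h₁, .right_trans h₂]
  · intro h
    cases h
    simp [h₁] at h₂

theorem S_state {y : NodePos T} {u : BTree Γ} (hu : T.subtreeAt y.1 = some u) (q : A.Q) :
    (circuit A T).S (.state y q) = Finset.image (y.1 ++ ·) '' A.stateSet u q := by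
  induction u generalizing y q with
  | leaf a =>
    ext s
    rw [Circuit.mem_S_of_typ_or _ rfl]
    constructor
    · rintro ⟨g, hw, hs⟩
      cases hw with
      | var_state hxy hy hq =>
        rw [hu] at hy
        cases hy
        rw [S_var, hxy, Set.mem_singleton_iff] at hs
        exact ⟨{[]}, BDTA.mem_stateSet_leaf.2 (.inr ⟨rfl, hq⟩), by simp [hs]⟩
      | empty_state hy hq =>
        rw [hu] at hy
        cases hy
        rw [S_empty, Set.mem_singleton_iff] at hs
        exact ⟨∅, BDTA.mem_stateSet_leaf.2 (.inl ⟨rfl, hq⟩), by simp [hs]⟩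
      | trans_state hy =>
        rw [hu] at hy
        cases hy
    · rintro ⟨s', hs', rfl⟩
      rcases BDTA.mem_stateSet_leaf.1 hs' with ⟨rfl, hq⟩ | ⟨rfl, hq⟩
      · exact ⟨.empty, .empty_state hu hq, by simp [S_empty]⟩
      · exact ⟨.var ⟨y.1, isLeafPos_iff_subtreeAt.2 ⟨a, hu⟩⟩, .var_state rfl hu hq,
          by simp [S_var]⟩
  | node a l r ihl ihr =>
    have hS : ∀ q₁ q₂, (circuit A T).S (.trans y q₁ q₂) =
        Finset.image (y.1 ++ ·) '' Set.image2 joinAssign (A.stateSet l q₁) (A.stateSet r q₂) := by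
      intro q₁ q₂
      let y₁ : NodePos T := ⟨y.1 ++ [false], mem_nodes.2 ⟨l, subtreeAt_append_false hu⟩⟩
      let y₂ : NodePos T := ⟨y.1 ++ [true], mem_nodes.2 ⟨r, subtreeAt_append_true hu⟩⟩
      rw [S_trans (y₁ := y₁) (y₂ := y₂) rfl rfl, ihl (subtreeAt_append_false hu),
        ihr (subtreeAt_append_true hu), image2_union_image_append]
    ext s
    rw [Circuit.mem_S_of_typ_or _ rfl]
    constructor
    · rintro ⟨g, hw, hs⟩
      cases hw with
      | var_state _ hy | empty_state hy =>
        rw [hu] at hy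
        cases hy
      | trans_state hy hq =>
        rw [hu] at hy
        cases hy
        rw [hS] at hs
        obtain ⟨_, ⟨s₁, hs₁, s₂, hs₂, rfl⟩, rfl⟩ := hs
        exact ⟨_, BDTA.mem_stateSet_node.2 ⟨_, _, hq, s₁, hs₁, s₂, hs₂, rfl⟩, rfl⟩
    · rintro ⟨s', hs', rfl⟩
      obtain ⟨q₁, q₂, hq, s₁, hs₁, s₂, hs₂, rfl⟩ := BDTA.mem_stateSet_node.1 hs'
      refine ⟨.trans y q₁ q₂, .trans_state hu hq, ?_⟩
      rw [hS]
      exact ⟨_, ⟨s₁, hs₁, s₂, hs₂, rfl⟩, rfl⟩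

theorem S_state_of_eq_nil {y : NodePos T} (hy : y.1 = []) (q : A.Q) :
    (circuit A T).S (.state y q) = A.stateSet T q := by
  rw [S_state (u := T) (by rw [hy, subtreeAt_nil]), hy]
  simp

theorem S_trans_of_node {y : NodePos T} {a : Γ} {l r : BTree Γ}
    (hy : T.subtreeAt y.1 = some (node a l r)) (q₁ q₂ : A.Q) :
    (circuit A T).S (.trans y q₁ q₂) =
      Finset.image (y.1 ++ ·) '' Set.image2 joinAssign (A.stateSet l q₁) (A.stateSet r q₂) := by
  let y₁ : NodePos T := ⟨y.1 ++ [false], mem_nodes.2 ⟨l, subtreeAt_append_false hy⟩⟩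
  let y₂ : NodePos T := ⟨y.1 ++ [true], mem_nodes.2 ⟨r, subtreeAt_append_true hy⟩⟩
  rw [S_trans (y₁ := y₁) (y₂ := y₂) rfl rfl, S_state (subtreeAt_append_false hy),
    S_state (subtreeAt_append_true hy), image2_union_image_append]

theorem captured_eq : (circuit A T).captured = assignSet A T := by
  ext s
  rw [BDTA.assignSet_eq_biUnion_stateSet, Circuit.captured, Circuit.mem_S_of_typ_or _ rfl]
  simp only [Set.mem_iUnion, exists_prop]
  constructor
  · rintro ⟨g, hw, hs⟩
    cases hw with
    | state_out hy hq => exact ⟨_, hq, S_state_of_eq_nil hy _ ▸ hs⟩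
  · rintro ⟨q, hq, hs⟩
    exact ⟨.state .root q, .state_out rfl hq, (S_state_of_eq_nil (y := .root) rfl q).symm ▸ hs⟩

theorem disjoint_S_state (y : NodePos T) {q q' : A.Q} (hq : q ≠ q') :
    Disjoint ((circuit A T).S (.state y q)) ((circuit A T).S (.state y q')) := by
  obtain ⟨u, hu⟩ := mem_nodes.1 y.2
  rw [S_state hu, S_state hu, Set.disjoint_image_iff (List.injective_finsetImage_append _)]
  exact Set.disjoint_left.2 fun _ h h' => hq (BDTA.eq_of_mem_stateSet h h')

theorem disjoint_S_trans {y : NodePos T} {a : Γ} {l r : BTree Γ}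
    (hy : T.subtreeAt y.1 = some (node a l r)) {q₁ q₂ q₁' q₂' : A.Q}
    (hq : (q₁, q₂) ≠ (q₁', q₂')) :
    Disjoint ((circuit A T).S (.trans y q₁ q₂)) ((circuit A T).S (.trans y q₁' q₂')) := by
  rw [S_trans_of_node hy, S_trans_of_node hy, Set.disjoint_image_iff (List.injective_finsetImage_append _)]
  refine Set.disjoint_left.2 ?_
  rintro _ ⟨s₁, h₁, s₂, h₂, rfl⟩ ⟨s₁', h₁', s₂', h₂', he⟩
  obtain ⟨rfl, rfl⟩ := joinAssign_injective he
  exact hq (Prod.ext (BDTA.eq_of_mem_stateSet h₁ h₁') (BDTA.eq_of_mem_stateSet h₂ h₂'))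

theorem deterministicOr_state (y : NodePos T) (q : A.Q) :
    (circuit A T).DeterministicOr (.state y q) := by
  intro g₁ g₂ h₁ h₂ hne
  rw [Circuit.mem_inputs] at h₁ h₂
  cases h₁ with
  | var_state hxy hy =>
    cases h₂ with
    | var_state hxy' => exact absurd (congrArg Gate.var (Subtype.ext (hxy.trans hxy'.symm))) hne
    | empty_state => simp [S_var, S_empty]
    | trans_state hy' => cases hy.symm.trans hy'
  | empty_state hy =>
    cases h₂ with
    | var_state => simp [S_var, S_empty]
    | empty_state => exact absurd rfl hne
    | trans_state hy' => cases hy.symm.trans hy'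
  | trans_state hy =>
    cases h₂ with
    | var_state _ hy' | empty_state hy' => cases hy.symm.trans hy'
    | trans_state hy' =>
      cases hy.symm.trans hy'
      exact disjoint_S_trans hy fun h => hne (by cases h; rfl)

theorem deterministicOr_out : (circuit A T).DeterministicOr .out := by
  intro g₁ g₂ h₁ h₂ hne
  rw [Circuit.mem_inputs] at h₁ h₂
  cases h₁ with
  | state_out hy₁ =>
    cases h₂ with
    | state_out hy₂ =>
      cases Subtype.ext (hy₁.trans hy₂.symm)
      exact disjoint_S_state _ fun hq => hne (by rw [hq])

theorem deterministicOr (g : Gate A T) (hg : (circuit A T).typ g = .or) :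
    (circuit A T).DeterministicOr g := by
  cases g with
  | out => exact deterministicOr_out
  | state y q => exact deterministicOr_state y q
  | empty | var | trans => cases hg

def Above (v : LeafPos T) : Gate A T → Prop
  | .out => True
  | .empty => False
  | .var x => x = v
  | .state y _ | .trans y _ _ => y.1 <+: v.1

theorem above_of_reaches {v : LeafPos T} {g : Gate A T} (h : (circuit A T).Reaches (.var v) g) :
    Above v g := by
  induction h with
  | refl => rfl
  | tail _ hw ih =>
    cases hw with
    | @var_state x y _ _ hxy =>
      show y.1 <+: v.1
      rw [← hxy, show x = v from ih]
    | empty_state => exact ih.elim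
    | trans_state => exact ih
    | @left_trans x y _ _ hy | @right_trans x y _ _ hy =>
      show x.1 <+: v.1
      exact List.IsPrefix.trans (hy ▸ List.prefix_append _ _) ih
    | state_out => trivial

theorem not_reaches_both_children {v : LeafPos T} {x y₁ y₂ : NodePos T} {q₁ q₂ : A.Q}
    (h₁ : y₁.1 = x.1 ++ [false]) (h₂ : y₂.1 = x.1 ++ [true])
    (hr₁ : (circuit A T).Reaches (.var v) (.state y₁ q₁))
    (hr₂ : (circuit A T).Reaches (.var v) (.state y₂ q₂)) : False := by
  have a₁ : y₁.1 <+: v.1 := above_of_reaches hr₁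
  have a₂ : y₂.1 <+: v.1 := above_of_reaches hr₂
  rw [h₁] at a₁
  rw [h₂] at a₂
  cases List.eq_of_append_singleton_prefix a₁ a₂

theorem decomposableAnd (g : Gate A T) (hg : (circuit A T).typ g = .and) :
    (circuit A T).DecomposableAnd g := by
  intro v g₁ g₂ hv h₁ h₂ hne hr₁ hr₂
  rw [Circuit.mem_inputs] at h₁ h₂
  cases v with
  | var v =>
    cases g with
    | trans =>
      cases h₁ with
      | left_trans hy₁ =>
        cases h₂ with
        | left_trans hy₂ => exact hne (by rw [Subtype.ext (hy₁.trans hy₂.symm)])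
        | right_trans hy₂ => exact not_reaches_both_children hy₁ hy₂ hr₁ hr₂
      | right_trans hy₁ =>
        cases h₂ with
        | left_trans hy₂ => exact not_reaches_both_children hy₂ hy₁ hr₂ hr₁
        | right_trans hy₂ => exact hne (by rw [Subtype.ext (hy₁.trans hy₂.symm)])
    | empty => cases h₁
    | out | var | state => cases hg
  | _ => cases hv

theorem vlab_bijOn : Set.BijOn (circuit A T).vlab {g | (circuit A T).typ g = .var}
    {p | T.IsLeafPos p} := by
  refine ⟨?_, ?_, fun p hp => ⟨.var ⟨p, hp⟩, rfl, rfl⟩⟩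
  · rintro (_ | _ | x | _ | _) hg <;> cases hg
    exact x.2
  · rintro (_ | _ | x | _ | _) hg <;> cases hg
    rintro (_ | _ | x' | _ | _) hg' <;> cases hg'
    exact fun h => congrArg Gate.var (Subtype.ext h)

variable (A T) in
abbrev WireCode : Type :=
  (LeafPos T × Γ) ⊕ (LeafPos T × Γ) ⊕ (NodePos T × A.Q × A.Q × Γ) ⊕
    (NodePos T × A.Q × A.Q × Bool) ⊕ A.Q

def wireOfCode : WireCode A T → Gate A T × Gate A T
  | .inl (x, a) => (.var x, .state x.toNode (A.init (a, true)))
  | .inr (.inl (x, a)) => (.empty, .state x.toNode (A.init (a, false)))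
  | .inr (.inr (.inl (y, q₁, q₂, a))) => (.trans y q₁ q₂, .state y (A.delta (a, false) q₁ q₂))
  | .inr (.inr (.inr (.inl (y, q₁, q₂, b)))) => (.state y (cond b q₂ q₁), .trans y.parent q₁ q₂)
  | .inr (.inr (.inr (.inr q))) => (.state .root q, .out)

theorem wires_subset_range_wireOfCode :
    {e : Gate A T × Gate A T | Wire e.1 e.2} ⊆ Set.range wireOfCode := by
  rintro ⟨g, g'⟩ (h : Wire g g')
  cases h with
  | @var_state x y a _ hxy _ hq =>
    obtain rfl : x.toNode = y := Subtype.ext hxy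
    exact ⟨.inl (x, a), by rw [wireOfCode, hq]⟩
  | @empty_state y a _ hy hq =>
    let x : LeafPos T := ⟨y.1, isLeafPos_iff_subtreeAt.2 ⟨a, hy⟩⟩
    exact ⟨.inr (.inl (x, a)), by rw [wireOfCode, hq]; rfl⟩
  | @trans_state y a _ _ q₁ q₂ _ _ hq =>
    exact ⟨.inr (.inr (.inl (y, q₁, q₂, a))), by rw [wireOfCode, hq]⟩
  | @left_trans x y q₁ q₂ hy =>
    obtain rfl : y.parent = x := Subtype.ext (by simp [NodePos.parent, hy])
    exact ⟨.inr (.inr (.inr (.inl (y, q₁, q₂, false)))), rfl⟩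
  | @right_trans x y q₁ q₂ hy =>
    obtain rfl : y.parent = x := Subtype.ext (by simp [NodePos.parent, hy])
    exact ⟨.inr (.inr (.inr (.inl (y, q₁, q₂, true)))), rfl⟩
  | @state_out y q hy _ =>
    obtain rfl : NodePos.root = y := Subtype.ext hy.symm
    exact ⟨.inr (.inr (.inr (.inr q))), rfl⟩

theorem size_le [Fintype Γ] : (circuit A T).size ≤
    11 * Fintype.card Γ * Fintype.card A.Q ^ 2 * T.size := by
  have hΓ : Nonempty Γ := by cases T with | leaf a | node a _ _ => exact ⟨a⟩
  have : Nonempty A.Q := ⟨A.init (hΓ.some, false)⟩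
  have hS : 1 ≤ T.size := (Finset.card_pos.2 ⟨_, T.nil_mem_nodes⟩).trans_le T.card_nodes_le_size
  rw [Circuit.size, Fintype.card_eq_nat_card, Fintype.card_eq_nat_card, Fintype.card_eq_nat_card]
  set L := Nat.card (LeafPos T)
  set N := Nat.card (NodePos T)
  set n := Nat.card A.Q
  set γ := Nat.card Γ
  have hwires : {e : Gate A T × Gate A T | Wire e.1 e.2}.ncard ≤
      2 * L * γ + N * n ^ 2 * γ + 2 * N * n ^ 2 + n := by
    calc _ ≤ (Set.range (wireOfCode (A := A) (T := T))).ncard :=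
          Set.ncard_le_ncard wires_subset_range_wireOfCode
      _ ≤ Nat.card (WireCode A T) := by
          rw [← Set.image_univ, ← Set.ncard_univ]
          exact Set.ncard_image_le
      _ = _ := by
          simp only [WireCode, Nat.card_sum, Nat.card_prod,
            Nat.card_eq_fintype_card (α := Bool), Fintype.card_bool]
          ring
  have hN : N ≤ T.size := (Nat.card_eq_finsetCard _).trans_le T.card_nodes_le_size
  have hL : L ≤ T.size := (Nat.card_le_card_of_injective LeafPos.toNode
    fun _ _ h => Subtype.ext (congrArg Subtype.val h :)).trans hN
  have hn : n ≤ n ^ 2 := Nat.le_self_pow two_ne_zero n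
  have hn₁ : 1 ≤ n ^ 2 := Nat.one_le_pow _ _ Nat.card_pos
  have hγ : 1 ≤ γ := Nat.card_pos
  -- The constant `11`: each of the eleven summands is at most `T.size * n ^ 2 * γ`.
  have key : ∀ x y z, x ≤ T.size → y ≤ n ^ 2 → z ≤ γ → x * y * z ≤ T.size * n ^ 2 * γ :=
    fun _ _ _ hx hy hz => Nat.mul_le_mul (Nat.mul_le_mul hx hy) hz
  have := Gate.natCard_le (A := A) (T := T)
  have := key 1 1 1 hS hn₁ hγ
  have := key L 1 1 hL hn₁ hγ
  have := key N n 1 hN hn hγ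
  have := key N (n ^ 2) 1 hN le_rfl hγ
  have := key L 1 γ hL hn₁ le_rfl
  have := key N (n ^ 2) γ hN le_rfl le_rfl
  have := key 1 n 1 hS hn hγ
  linarith

end TreeProvenance

/-- There is a universal constant `c` such that for every finite alphabet `Γ`, every
bottom-up deterministic tree automaton `A` on full binary trees over `Γ × Bool`, and
every full binary `Γ`-tree `T`, there exists a monotone circuit `C` whose variable
gates are in bijection with the leaves of `T`, which is a d-DNNF in zero-suppressed
semantics, such that `S(C)` equals the assignment set `α(A, T)` and
`|C| ≤ c·|Γ|·|Q|²·|T|`. -/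
theorem stmt13 :
    ∃ c : ℕ, 0 < c ∧
      ∀ (Γ : Type) [Fintype Γ] (A : BDTA (Γ × Bool)) (T : BTree Γ),
        ∃ C : Circuit (List Bool),
          C.dDNNF ∧
          Set.BijOn C.vlab {g : C.Gate | C.typ g = GateType.var}
            {p : List Bool | T.IsLeafPos p} ∧
          C.captured = assignSet A T ∧
          C.size ≤ c * Fintype.card Γ * Fintype.card A.Q ^ 2 * T.size :=
  ⟨11, by norm_num, fun _ _ A T =>
    ⟨TreeProvenance.circuit A T,
      ⟨TreeProvenance.decomposableAnd, TreeProvenance.deterministicOr⟩,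
      TreeProvenance.vlab_bijOn, TreeProvenance.captured_eq, TreeProvenance.size_le⟩⟩
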